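/- Let k1, k2 ≥ 1 and let C1, C2 : Matrix (Fin k1) (Fin k2) ℝ satisfy B_{k1} * (C2 − C1) * (B_{k2})ᵀ = 0. Then for every λ ∈ ℝ, the matrix P defined by P i j = C1 i j + (C2 (k1−1) j − C1 (k1−1) j) + λ (where k1−1 denotes the last row index) is a potential function of the bi-matrix game (C1, C2). -/

import Mathlib

open Matrix

/-- The matrix `B_k = [I_{k-1}, -1_{k-1}]` of size `(k-1) × k`. -/
def Bmat (k : ℕ) : Matrix (Fin (k - 1)) (Fin k) ℝ :=
  Matrix.of fun i j => if (j : ℕ) = (i : ℕ) then 1 else if (j : ℕ) = k - 1 then -1 else 0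

/-!
With `D = C₂ - C₁`, the entry `(i, j)` of `B_{k₁} D B_{k₂}ᵀ` is the mixed second difference of `D`
between the rows `i, k₁-1` and the columns `j, k₂-1`. Its vanishing makes all mixed second
differences of `D` vanish, i.e. `C₂ - C₁` differs between two columns by the same amount in every
row. Since `P` is `C₁` plus a function of the column alone (the last row of `C₂ - C₁`), this is
exactly the column condition of a potential; the row condition holds by construction.
-/

section Bmat

variable {m n : ℕ}

lemma Bmat_succ_row (i : Fin n) :
    Bmat (n + 1) i = Pi.single i.castSucc 1 - Pi.single (Fin.last n) 1 := by
  funext a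
  simp only [Bmat, of_apply, Pi.sub_apply, Pi.single_apply, Fin.ext_iff, Fin.val_castSucc,
    Fin.val_last, Nat.add_sub_cancel]
  have := i.isLt
  split_ifs <;> first | omega | norm_num

lemma Bmat_succ_mul_apply {ι : Type*} (A : Matrix (Fin (n + 1)) ι ℝ) (i : Fin n) (j : ι) :
    (Bmat (n + 1) * A) i j = A i.castSucc j - A (Fin.last n) j := by
  rw [mul_apply', Bmat_succ_row, sub_dotProduct, single_dotProduct, single_dotProduct, one_mul,
    one_mul]

lemma mul_Bmat_succ_transpose_apply {ι : Type*} (A : Matrix ι (Fin (n + 1)) ℝ) (i : ι)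
    (j : Fin n) :
    (A * (Bmat (n + 1))ᵀ) i j = A i j.castSucc - A i (Fin.last n) := by
  rw [mul_apply']
  change A i ⬝ᵥ Bmat (n + 1) j = _
  rw [Bmat_succ_row, dotProduct_sub, dotProduct_single, dotProduct_single, mul_one, mul_one]

lemma Bmat_succ_mul_mul_transpose_apply (D : Matrix (Fin (m + 1)) (Fin (n + 1)) ℝ)
    (i : Fin m) (j : Fin n) :
    (Bmat (m + 1) * D * (Bmat (n + 1))ᵀ) i j =
      D i.castSucc j.castSucc - D (Fin.last m) j.castSucc
        - (D i.castSucc (Fin.last n) - D (Fin.last m) (Fin.last n)) := by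
  rw [mul_Bmat_succ_transpose_apply, Bmat_succ_mul_apply, Bmat_succ_mul_apply]

lemma mixed_sub_last_eq_zero_of_Bmat_mul_mul_eq_zero {D : Matrix (Fin (m + 1)) (Fin (n + 1)) ℝ}
    (h : Bmat (m + 1) * D * (Bmat (n + 1))ᵀ = 0) (i : Fin (m + 1)) (j : Fin (n + 1)) :
    D i j - D (Fin.last m) j - (D i (Fin.last n) - D (Fin.last m) (Fin.last n)) = 0 := by
  cases i using Fin.lastCases with
  | last => ring
  | cast i =>
    cases j using Fin.lastCases with
    | last => ring
    | cast j => simpa only [Bmat_succ_mul_mul_transpose_apply, Matrix.zero_apply] using congrFun₂ h i j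

end Bmat

lemma mixed_sub_eq_zero_of_Bmat_mul_mul_eq_zero {k₁ k₂ : ℕ} {D : Matrix (Fin k₁) (Fin k₂) ℝ}
    (h : Bmat k₁ * D * (Bmat k₂)ᵀ = 0) (i i' : Fin k₁) (j j' : Fin k₂) :
    D i j - D i j' - (D i' j - D i' j') = 0 := by
  obtain ⟨m, rfl⟩ := Nat.exists_eq_add_one_of_ne_zero i.pos.ne'
  obtain ⟨n, rfl⟩ := Nat.exists_eq_add_one_of_ne_zero j.pos.ne'
  have := mixed_sub_last_eq_zero_of_Bmat_mul_mul_eq_zero h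
  linarith [this i j, this i j', this i' j, this i' j']

theorem stmt1 (k1 k2 : ℕ) (hk1 : 1 ≤ k1)
    (C1 C2 : Matrix (Fin k1) (Fin k2) ℝ)
    (h : Bmat k1 * (C2 - C1) * (Bmat k2)ᵀ = 0)
    (lam : ℝ) (P : Matrix (Fin k1) (Fin k2) ℝ)
    (hP : ∀ (i : Fin k1) (j : Fin k2),
      P i j = C1 i j + (C2 ⟨k1 - 1, by omega⟩ j - C1 ⟨k1 - 1, by omega⟩ j) + lam) :
    (∀ i i' : Fin k1, ∀ j : Fin k2, C1 i j - C1 i' j = P i j - P i' j) ∧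
    (∀ i : Fin k1, ∀ j j' : Fin k2, C2 i j - C2 i j' = P i j - P i j') := by
  refine ⟨fun i i' j => by rw [hP, hP]; ring, fun i j j' => ?_⟩
  have hmixed := mixed_sub_eq_zero_of_Bmat_mul_mul_eq_zero h i ⟨k1 - 1, by omega⟩ j j'
  simp only [Matrix.sub_apply] at hmixed
  rw [hP, hP]
  linarith
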